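/- In LR-Subtraction Nim, if every element of S is even, then O_S(n) = L if n is even and O_S(n) = R if n is odd. -/
import Mathlib


open scoped Classical

inductive Outcome : Type
  | L | R | N | P
deriving DecidableEq

/-- Outcome determined from the set of outcomes of the options of a non-terminal position. -/
noncomputable def fromOptions (T : Set Outcome) : Outcome :=
  if Outcome.L ∈ T ∧ T ⊆ {Outcome.L, Outcome.N} then Outcome.L
  else if Outcome.R ∈ T ∧ T ⊆ {Outcome.R, Outcome.N} then Outcome.R
  else if T = {Outcome.N} then Outcome.P
  else Outcome.N

/-- Outcome of Ending Partizan Subtraction Nim with removable set `S ⊆ ℤ≥2` and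
terminal assignment `W`. -/
noncomputable def epOutcome (S : Set ℕ) (hS : ∀ s ∈ S, 2 ≤ s) (W : ℕ → Outcome) : ℕ → Outcome :=
  fun n => Nat.strongRecOn n (fun n ih =>
    if ∃ s ∈ S, s ≤ n then
      fromOptions {o | ∃ s, ∃ hs : s ∈ S, ∃ hsn : s ≤ n,
        o = ih (n - s) (by have := hS s hs; omega)}
    else W n)

/-- Outcome of `LR`-Subtraction Nim: at a terminal position, Left wins if the number of
remaining tokens is even, Right wins if it is odd. -/
noncomputable def lrOutcome (S : Set ℕ) (hS : ∀ s ∈ S, 2 ≤ s) : ℕ → Outcome :=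
  epOutcome S hS (fun n => if Even n then Outcome.L else Outcome.R)

lemma epOutcome_eq (S : Set ℕ) (hS : ∀ s ∈ S, 2 ≤ s) (W : ℕ → Outcome) (n : ℕ) :
    epOutcome S hS W n =
      if ∃ s ∈ S, s ≤ n then
        fromOptions {o | ∃ s, ∃ _hs : s ∈ S, ∃ _hsn : s ≤ n, o = epOutcome S hS W (n - s)}
      else W n := by
  conv_lhs => rw [epOutcome, Nat.strongRecOn_eq]
  rfl

theorem stmt12 (S : Set ℕ) (hS : ∀ s ∈ S, 2 ≤ s) (heven : ∀ s ∈ S, Even s) (n : ℕ) :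
    (Even n → lrOutcome S hS n = Outcome.L) ∧ (¬ Even n → lrOutcome S hS n = Outcome.R) := by
  induction n using Nat.strong_induction_on with
  | _ n ih =>
  rw [lrOutcome, epOutcome_eq]
  by_cases h : ∃ s ∈ S, s ≤ n
  · simp only [if_pos h]
    set T : Set Outcome := {o | ∃ s, ∃ _hs : s ∈ S, ∃ _hsn : s ≤ n,
      o = epOutcome S hS (fun n => if Even n then Outcome.L else Outcome.R) (n - s)} with hT
    obtain ⟨s₀, hs₀, hs₀n⟩ := h
    have hpar : ∀ s (hs : s ∈ S) (hsn : s ≤ n), Even (n - s) ↔ Even n := by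
      intro s hs hsn
      obtain ⟨k, hk⟩ := heven s hs
      constructor
      · rintro ⟨m, hm⟩; exact ⟨m + k, by omega⟩
      · rintro ⟨m, hm⟩; exact ⟨m - k, by omega⟩
    constructor
    · intro hn
      have hTeq : T = {Outcome.L} := by
        ext o
        constructor
        · rintro ⟨s, hs, hsn, rfl⟩
          have hE : Even (n - s) := (hpar s hs hsn).2 hn
          have := (ih (n - s) (by have := hS s hs; omega)).1 hE
          rw [lrOutcome] at this
          simp [this]
        · rintro rfl
          refine ⟨s₀, hs₀, hs₀n, ?_⟩
          have hE : Even (n - s₀) := (hpar s₀ hs₀ hs₀n).2 hn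
          have := (ih (n - s₀) (by have := hS s₀ hs₀; omega)).1 hE
          rw [lrOutcome] at this
          simp [this]
      rw [hTeq, fromOptions]
      simp
    · intro hn
      have hTeq : T = {Outcome.R} := by
        ext o
        constructor
        · rintro ⟨s, hs, hsn, rfl⟩
          have hE : ¬ Even (n - s) := fun hE => hn ((hpar s hs hsn).1 hE)
          have := (ih (n - s) (by have := hS s hs; omega)).2 hE
          rw [lrOutcome] at this
          simp [this]
        · rintro rfl
          refine ⟨s₀, hs₀, hs₀n, ?_⟩
          have hE : ¬ Even (n - s₀) := fun hE => hn ((hpar s₀ hs₀ hs₀n).1 hE)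
          have := (ih (n - s₀) (by have := hS s₀ hs₀; omega)).2 hE
          rw [lrOutcome] at this
          simp [this]
      rw [hTeq, fromOptions]
      have h1 : ¬ (Outcome.L ∈ ({Outcome.R} : Set Outcome) ∧
          ({Outcome.R} : Set Outcome) ⊆ {Outcome.L, Outcome.N}) := by
        rintro ⟨h, -⟩; simp at h
      rw [if_neg h1]
      simp
  · simp only [if_neg h]
    constructor <;> intro hn <;> simp [hn]
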